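/- arXiv:1604.00539 — 4 statements merged into one kernel-verified Lean document; each statement's English description precedes it below -/
import Mathlib

section
/- Let U be a real random variable, T : ℝ → ℝ strictly monotone increasing and surjective, and G a distribution function with density g. Suppose for all x, |P(T(U) ≤ x) − G(x)| ≤ d̃ with d̃ > 0. Let α ∈ (d̃, 1−d̃), let x̃_α satisfy P(T(U) ≤ x̃_α) = 1−α, and u_α satisfy G(u_α) = 1−α, with G strictly increasing. Let m = min of g over [u_{α+d̃}, u_{α−d̃}] where G(u_{α±d̃}) = 1−(α±d̃). If m > 0, then |x̃_α − u_α| ≤ d̃ / m. -/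
open Set MeasureTheory

/-- Theorem 2: error bound for the quantile of the Bartlett-corrected
statistic `T(U)`. -/
theorem transformed_quantile_error_bound
    {Ω : Type*} [MeasurableSpace Ω] (μ : Measure Ω) [IsProbabilityMeasure μ]
    (U : Ω → ℝ) (T G g : ℝ → ℝ) (dt α xtα uα uαpd uαmd m : ℝ)
    (hT : StrictMono T) (hTsurj : Function.Surjective T)
    (hG : ∀ x, HasDerivAt G (g x) x) (hg : Continuous g)
    (hGmono : StrictMono G)
    (hbound : ∀ x, |(μ {ω | T (U ω) ≤ x}).toReal - G x| ≤ dt) (hd : 0 < dt)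
    (hα₁ : dt < α) (hα₂ : α < 1 - dt)
    (hxtα : (μ {ω | T (U ω) ≤ xtα}).toReal = 1 - α)
    (huα : G uα = 1 - α)
    (hupd : G uαpd = 1 - (α + dt)) (humd : G uαmd = 1 - (α - dt))
    (hm : m = sInf (g '' Icc uαpd uαmd)) (hm0 : 0 < m) :
    |xtα - uα| ≤ dt / m := by
  have hb := abs_le.mp (hxtα ▸ hbound xtα)
  -- bounds on G xtα
  have hGx1 : G uαpd ≤ G xtα := by rw [hupd]; linarith [hb.1, hb.2]
  have hGx2 : G xtα ≤ G uαmd := by rw [humd]; linarith [hb.1, hb.2]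
  have hx1 : uαpd ≤ xtα := hGmono.le_iff_le.mp hGx1
  have hx2 : xtα ≤ uαmd := hGmono.le_iff_le.mp hGx2
  have hu1 : uαpd ≤ uα := hGmono.le_iff_le.mp (by rw [hupd, huα]; linarith)
  have hu2 : uα ≤ uαmd := hGmono.le_iff_le.mp (by rw [humd, huα]; linarith)
  have hmle : ∀ x ∈ Icc uαpd uαmd, m ≤ g x := by
    intro x hx
    rw [hm]
    exact csInf_le (isCompact_Icc.image hg).bddBelow ⟨x, hx, rfl⟩
  have hdiff : |G xtα - G uα| ≤ dt := by
    rw [huα]; rw [abs_sub_comm]; exact abs_le.mpr ⟨by linarith [hb.1, hb.2], by linarith [hb.1, hb.2]⟩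
  have key : ∀ a b : ℝ, a < b → uαpd ≤ a → b ≤ uαmd → m * (b - a) ≤ G b - G a := by
    intro a b hab ha hb'
    obtain ⟨c, hc, hceq⟩ := exists_hasDerivAt_eq_slope G g hab
      (fun x _ => (hG x).continuousAt.continuousWithinAt)
      (fun x _ => hG x)
    have hcIcc : c ∈ Icc uαpd uαmd := ⟨le_trans ha hc.1.le, le_trans hc.2.le hb'⟩
    have h1 : m ≤ g c := hmle c hcIcc
    have h2 : g c * (b - a) = G b - G a := by
      rw [hceq, div_mul_cancel₀ _ (by linarith : b - a ≠ 0)]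
    nlinarith
  rcases lt_trichotomy xtα uα with h | h | h
  · have := key xtα uα h hx1 hu2
    rw [abs_of_neg (by linarith)]
    have h2 : m * (uα - xtα) ≤ dt := by
      have habs := (abs_le.mp hdiff).1
      linarith
    rw [le_div_iff₀ hm0]; nlinarith
  · simp [h]; positivity
  · have := key uα xtα h hu1 hx2
    rw [abs_of_pos (by linarith)]
    have : m * (xtα - uα) ≤ dt := by
      have habs := (abs_le.mp hdiff).2
      linarith
    rw [le_div_iff₀ hm0]; nlinarith
end

section
/- Let U be a random variable, T strictly increasing with differentiable inverse b having continuous derivative, and G a strictly increasing distribution function with continuous density g. Suppose |P(T(U) ≤ x) − G(x)| ≤ d̃ for all x, with d̃ > 0, and let α ∈ (d̃, 1−d̃). Let x_α with P(U ≤ x_α) = 1−α, u_α with G(u_α) = 1−α, and define the interval I = [u_{α+d̃}, u_{α−d̃}] by G(u_{α±d̃}) = 1−(α±d̃). If m = min_{v∈I} g(v) > 0 and M = max_{v∈I} |b'(v)|, then |x_α − b(u_α)| ≤ d̃ · M / m. -/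
open Set MeasureTheory

/-- Theorem 3: computable error bound for the Cornish–Fisher approximation
`b(u_α)` of the quantile `x_α` of the original statistic `U`, given a
non-asymptotic bound `d̃` for the distribution of the transformed
statistic `T(U)`. -/
theorem cornish_fisher_error_bound
    {Ω : Type*} [MeasurableSpace Ω] (μ : Measure Ω) [IsProbabilityMeasure μ]
    (U : Ω → ℝ) (T b G g : ℝ → ℝ) (dt α xα uα uαpd uαmd m M : ℝ)
    (hT : StrictMono T) (hb : ∀ x, b (T x) = x)
    (hbdiff : Differentiable ℝ b) (hbderc : Continuous (deriv b))
    (hG : ∀ x, HasDerivAt G (g x) x) (hg : Continuous g)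
    (hGmono : StrictMono G)
    (hFU : StrictMono (fun x => (μ {ω | U ω ≤ x}).toReal))
    (hFUc : Continuous (fun x => (μ {ω | U ω ≤ x}).toReal))
    (hbound : ∀ x, |(μ {ω | T (U ω) ≤ x}).toReal - G x| ≤ dt) (hd : 0 < dt)
    (hα₁ : dt < α) (hα₂ : α < 1 - dt)
    (hxα : (μ {ω | U ω ≤ xα}).toReal = 1 - α)
    (huα : G uα = 1 - α)
    (hupd : G uαpd = 1 - (α + dt)) (humd : G uαmd = 1 - (α - dt))
    (hm : m = sInf (g '' Icc uαpd uαmd)) (hm0 : 0 < m)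
    (hM : M = sSup ((fun v => |deriv b v|) '' Icc uαpd uαmd)) :
    |xα - b uα| ≤ dt * M / m := by
  have hGc : Continuous G := continuous_iff_continuousAt.mpr fun x => (hG x).continuousAt
  -- the set equality
  have hset : {ω | T (U ω) ≤ T xα} = {ω | U ω ≤ xα} := by
    ext ω; exact hT.le_iff_le
  have ht : |(1 - α) - G (T xα)| ≤ dt := by
    have h := hbound (T xα)
    rwa [hset, hxα] at h
  have ht' := abs_le.mp ht
  -- membership of T xα and uα in the interval
  have htmem : T xα ∈ Icc uαpd uαmd := by
    constructor
    · rw [← hGmono.le_iff_le]; rw [hupd]; linarith [ht'.2]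
    · rw [← hGmono.le_iff_le]; rw [humd]; linarith [ht'.1]
  have humem : uα ∈ Icc uαpd uαmd := by
    constructor
    · rw [← hGmono.le_iff_le, hupd, huα]; linarith
    · rw [← hGmono.le_iff_le, huα, humd]; linarith
  -- bounds from inf/sup
  have hmle : ∀ v ∈ Icc uαpd uαmd, m ≤ g v := fun v hv => by
    rw [hm]
    exact csInf_le (isCompact_Icc.image hg).bddBelow (mem_image_of_mem _ hv)
  have hMle : ∀ v ∈ Icc uαpd uαmd, |deriv b v| ≤ M := fun v hv => by
    rw [hM]
    exact le_csSup (isCompact_Icc.image hbderc.abs).bddAbove (mem_image_of_mem _ hv)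
  have hM0 : 0 ≤ M := le_trans (abs_nonneg _) (hMle uα humem)
  -- MVT for G: m * (c - a) ≤ G c - G a for a < c in I
  have key : ∀ a ∈ Icc uαpd uαmd, ∀ c ∈ Icc uαpd uαmd, a < c →
      m * (c - a) ≤ G c - G a := by
    intro a ha c hc hlt
    obtain ⟨x, hx, hxe⟩ := exists_hasDerivAt_eq_slope G g hlt hGc.continuousOn
      (fun y _ => hG y)
    have hxI : x ∈ Icc uαpd uαmd := ⟨ha.1.trans hx.1.le, hx.2.le.trans hc.2⟩
    have heq : G c - G a = g x * (c - a) :=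
      ((div_eq_iff (sub_ne_zero.mpr hlt.ne')).mp hxe.symm)
    rw [heq]
    exact mul_le_mul_of_nonneg_right (hmle x hxI) (by linarith)
  -- m * |T xα - uα| ≤ dt
  have hdist : m * |T xα - uα| ≤ dt := by
    rcases lt_trichotomy (T xα) uα with h | h | h
    · rw [abs_of_neg (by linarith)]
      have := key _ htmem _ humem h
      rw [huα] at this
      linarith [ht'.2]
    · rw [h]; simp; linarith
    · rw [abs_of_pos (by linarith)]
      have := key _ humem _ htmem h
      rw [huα] at this
      linarith [ht'.1]
  have hdist' : |T xα - uα| ≤ dt / m := (le_div_iff₀ hm0).mpr (by linarith [mul_comm m |T xα - uα|])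
  -- Lipschitz bound for b on I
  have hlip := (convex_Icc uαpd uαmd).norm_image_sub_le_of_norm_deriv_le
    (fun x _ => hbdiff x) (fun x hx => by simpa using hMle x hx) humem htmem
  rw [Real.norm_eq_abs, Real.norm_eq_abs] at hlip
  calc |xα - b uα| = |b (T xα) - b uα| := by rw [hb xα]
    _ ≤ M * |T xα - uα| := hlip
    _ ≤ M * (dt / m) := mul_le_mul_of_nonneg_left hdist' hM0
    _ = dt * M / m := by ring
end

section
/- Let F, G be continuous strictly increasing distribution functions with |F(x) − G(x)| ≤ d for all x. Then for every α ∈ (d, 1−d), |F⁻¹(1−α) − G⁻¹(1−α)| ≤ d / inf{g(v) : v ∈ [G⁻¹(1−α−d), G⁻¹(1−α+d)]}, where g is the (continuous, positive) density of G, provided the infimum is positive. -/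
open Set Filter Function

private lemma exists_eq_of_tendsto' (F : ℝ → ℝ) (hFc : Continuous F)
    (hF0 : Tendsto F atBot (nhds 0)) (hF1 : Tendsto F atTop (nhds 1))
    {y : ℝ} (h0 : 0 < y) (h1 : y < 1) : ∃ x, F x = y := by
  obtain ⟨x₀, hx₀⟩ := (hF0.eventually_lt_const h0).exists
  obtain ⟨x₁, hx₁⟩ := (hF1.eventually_const_lt h1).exists
  exact intermediate_value_univ x₀ x₁ hFc ⟨hx₀.le, hx₁.le⟩

/-- Theorem 1 restated via inverse distribution functions: quantile stability
under a uniform perturbation of the distribution function. -/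
theorem quantile_stability_inverse_form
    (F G g : ℝ → ℝ) (d α : ℝ)
    (hFmono : StrictMono F) (hFc : Continuous F)
    (hGmono : StrictMono G) (hGc : Continuous G)
    (hF0 : Tendsto F atBot (nhds 0)) (hF1 : Tendsto F atTop (nhds 1))
    (hG0 : Tendsto G atBot (nhds 0)) (hG1 : Tendsto G atTop (nhds 1))
    (hg : ∀ x, HasDerivAt G (g x) x) (hgc : Continuous g) (hgpos : ∀ x, 0 < g x)
    (hFG : ∀ x, |F x - G x| ≤ d) (hd : 0 < d)
    (hα₁ : d < α) (hα₂ : α < 1 - d)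
    (hinf : 0 < sInf (g '' Icc (invFun G (1 - α - d)) (invFun G (1 - α + d)))) :
    |invFun F (1 - α) - invFun G (1 - α)|
      ≤ d / sInf (g '' Icc (invFun G (1 - α - d)) (invFun G (1 - α + d))) := by
  set a := invFun G (1 - α - d) with ha
  set b := invFun G (1 - α + d) with hb
  set m := sInf (g '' Icc a b) with hm
  set xF := invFun F (1 - α) with hxF
  set xG := invFun G (1 - α) with hxG
  have hGa : G a = 1 - α - d :=
    invFun_eq (exists_eq_of_tendsto' G hGc hG0 hG1 (by linarith) (by linarith))
  have hGb : G b = 1 - α + d :=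
    invFun_eq (exists_eq_of_tendsto' G hGc hG0 hG1 (by linarith) (by linarith))
  have hGxG : G xG = 1 - α :=
    invFun_eq (exists_eq_of_tendsto' G hGc hG0 hG1 (by linarith) (by linarith))
  have hFxF : F xF = 1 - α :=
    invFun_eq (exists_eq_of_tendsto' F hFc hF0 hF1 (by linarith) (by linarith))
  have hGxF : |(1 - α) - G xF| ≤ d := by
    have := hFG xF; rwa [hFxF] at this
  rw [abs_le] at hGxF
  have haxF : a ≤ xF := hGmono.le_iff_le.mp (by rw [hGa]; linarith)
  have hxFb : xF ≤ b := hGmono.le_iff_le.mp (by rw [hGb]; linarith)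
  have haxG : a ≤ xG := hGmono.le_iff_le.mp (by rw [hGa, hGxG]; linarith)
  have hxGb : xG ≤ b := hGmono.le_iff_le.mp (by rw [hGb, hGxG]; linarith)
  have hbdd : BddBelow (g '' Icc a b) := by
    refine ⟨0, fun y hy => ?_⟩
    obtain ⟨x, -, rfl⟩ := hy
    exact (hgpos x).le
  have key : ∀ u v : ℝ, u ∈ Icc a b → v ∈ Icc a b → u < v →
      m * (v - u) ≤ G v - G u := by
    intro u v hu hv huv
    obtain ⟨c, hc, hcs⟩ :=
      exists_hasDerivAt_eq_slope G g huv hGc.continuousOn (fun x _ => hg x)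
    have hcm : m ≤ g c :=
      csInf_le hbdd ⟨c, ⟨le_trans hu.1 hc.1.le, le_trans hc.2.le hv.2⟩, rfl⟩
    have hvu : (0:ℝ) < v - u := sub_pos.mpr huv
    calc m * (v - u) ≤ g c * (v - u) := by nlinarith
      _ = G v - G u := by rw [hcs, div_mul_cancel₀ _ hvu.ne']
  have main : m * |xF - xG| ≤ d := by
    rcases lt_trichotomy xF xG with h | h | h
    · have hk := key xF xG ⟨haxF, hxFb⟩ ⟨haxG, hxGb⟩ h
      rw [abs_of_neg (sub_neg.mpr h)]
      rw [hGxG] at hk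
      nlinarith
    · simp [h]; linarith
    · have hk := key xG xF ⟨haxG, hxGb⟩ ⟨haxF, hxFb⟩ h
      rw [abs_of_pos (sub_pos.mpr h)]
      rw [hGxG] at hk
      nlinarith
  rw [le_div_iff₀ hinf]
  nlinarith [main]
end

section
/- Let G be a continuous strictly increasing distribution function and g its continuous positive density. Suppose F_n is a sequence of distribution functions with sup_x |F_n(x) − G(x)| ≤ c/n for a constant c > 0. Fix α ∈ (0,1). Then for all n > c/min(α, 1−α), the quantiles x_{α,n} = F_n^{-1}(1−α) satisfy |x_{α,n} − u_α| ≤ c/(n · m_n) where u_α = G^{-1}(1−α) and m_n = min of g on [G^{-1}(1−α−c/n), G^{-1}(1−α+c/n)]; in particular x_{α,n} → u_α and |x_{α,n} − u_α| = O(1/n). -/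
open Set Filter Function Asymptotics

/-! If `sup |F - G| ≤ ε` and `x`, `u` are the `y`-quantiles of `F` and `G`, then
`|G x - y| = |G x - F x| ≤ ε`, so `x`, like `u`, lies in the window between the `G`-quantiles
at `y ± ε`. There `G' = g ≥ m`, the minimum of `g` on the window, so the mean value theorem gives
`m |x - u| ≤ |G x - G u| ≤ ε`. As `ε = c/n` decreases the windows shrink and their minima grow,
so the first admissible window gives a uniform constant in `|x_n - u| ≤ c / (n m)`. -/

theorem apply_invFun_of_tendsto {X Y : Type*} [LinearOrder X] [TopologicalSpace X]
    [PreconnectedSpace X] [Nonempty X] [LinearOrder Y] [TopologicalSpace Y]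
    [OrderClosedTopology Y] {H : X → Y} (hc : Continuous H) {l₀ l₁ : Y}
    (h₀ : Tendsto H atBot (nhds l₀)) (h₁ : Tendsto H atTop (nhds l₁)) {y : Y}
    (hy : y ∈ Ioo l₀ l₁) : H (invFun H y) = y := by
  obtain ⟨a, ha⟩ := (h₀.eventually_lt_const hy.1).exists
  obtain ⟨b, hb⟩ := (h₁.eventually_const_lt hy.2).exists
  obtain ⟨x, hx⟩ := intermediate_value_univ a b hc ⟨ha.le, hb.le⟩
  exact invFun_eq ⟨x, hx⟩

theorem monotoneOn_invFun {X Y : Type*} [LinearOrder X] [TopologicalSpace X]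
    [PreconnectedSpace X] [Nonempty X] [LinearOrder Y] [TopologicalSpace Y]
    [OrderClosedTopology Y] {H : X → Y} (hc : Continuous H) (hmono : StrictMono H) {l₀ l₁ : Y}
    (h₀ : Tendsto H atBot (nhds l₀)) (h₁ : Tendsto H atTop (nhds l₁)) :
    MonotoneOn (invFun H) (Ioo l₀ l₁) := fun y hy y' hy' hyy' => by
  rwa [← hmono.le_iff_le, apply_invFun_of_tendsto hc h₀ h₁ hy, apply_invFun_of_tendsto hc h₀ h₁ hy']

theorem mul_abs_sub_le_abs_sub_of_le_hasDerivAt {G g : ℝ → ℝ} {a b m : ℝ}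
    (hg : ∀ x ∈ Icc a b, HasDerivAt G (g x) x) (hm : ∀ x ∈ Icc a b, m ≤ g x)
    {x u : ℝ} (hx : x ∈ Icc a b) (hu : u ∈ Icc a b) : m * |x - u| ≤ |G x - G u| := by
  have growth : ∀ s ∈ Icc a b, ∀ t ∈ Icc a b, s ≤ t → m * (t - s) ≤ G t - G s :=
    (convex_Icc a b).mul_sub_le_image_sub_of_le_deriv
      (fun x hx => (hg x hx).continuousAt.continuousWithinAt)
      (fun x hx => (hg x (interior_subset hx)).differentiableAt.differentiableWithinAt)
      (fun x hx => (hg x (interior_subset hx)).deriv ▸ hm x (interior_subset hx))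
  rcases le_total x u with h | h
  · rw [abs_sub_comm x u, abs_of_nonneg (sub_nonneg.2 h), abs_sub_comm]
    exact (growth x hx u hu h).trans (le_abs_self _)
  · rw [abs_of_nonneg (sub_nonneg.2 h)]
    exact (growth u hu x hx h).trans (le_abs_self _)

theorem pos_sInf_image_Icc {g : ℝ → ℝ} {a b : ℝ} (hab : a ≤ b) (hgc : ContinuousOn g (Icc a b))
    (hgpos : ∀ x ∈ Icc a b, 0 < g x) : 0 < sInf (g '' Icc a b) := by
  obtain ⟨x, hx, hgx⟩ := (isCompact_Icc.image_of_continuousOn hgc).sInf_mem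
    ((nonempty_Icc.mpr hab).image g)
  exact hgx ▸ hgpos x hx

/-- The paper's `m_n` is `quantileWindowInf G g (1 - α) (c / n)`. -/
noncomputable def quantileWindowInf (G g : ℝ → ℝ) (y ε : ℝ) : ℝ :=
  sInf (g '' Icc (invFun G (y - ε)) (invFun G (y + ε)))

section Window

variable {G g : ℝ → ℝ} {y ε ε' : ℝ}

theorem mem_Icc_invFun_of_abs_sub_le (hGc : Continuous G) (hGmono : StrictMono G)
    (hG0 : Tendsto G atBot (nhds 0)) (hG1 : Tendsto G atTop (nhds 1))
    (hlo : 0 < y - ε) (hhi : y + ε < 1) {x : ℝ} (hx : |G x - y| ≤ ε) :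
    x ∈ Icc (invFun G (y - ε)) (invFun G (y + ε)) := by
  obtain ⟨hx₁, hx₂⟩ := abs_le.1 hx
  have hGx : G x ∈ Ioo (0 : ℝ) 1 := ⟨by linarith, by linarith⟩
  have hmono := monotoneOn_invFun hGc hGmono hG0 hG1
  rw [← leftInverse_invFun hGmono.injective x]
  exact ⟨hmono ⟨hlo, by linarith⟩ hGx (by linarith), hmono hGx ⟨by linarith, hhi⟩ (by linarith)⟩

theorem invFun_mem_Icc_invFun (hGc : Continuous G) (hGmono : StrictMono G)
    (hG0 : Tendsto G atBot (nhds 0)) (hG1 : Tendsto G atTop (nhds 1))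
    (hlo : 0 < y - ε) (hhi : y + ε < 1) (hε : 0 ≤ ε) :
    invFun G y ∈ Icc (invFun G (y - ε)) (invFun G (y + ε)) := by
  have hmono := monotoneOn_invFun hGc hGmono hG0 hG1
  exact ⟨hmono ⟨hlo, by linarith⟩ ⟨by linarith, by linarith⟩ (by linarith),
    hmono ⟨by linarith, by linarith⟩ ⟨by linarith, hhi⟩ (by linarith)⟩

theorem quantileWindowInf_pos (hGc : Continuous G) (hGmono : StrictMono G)
    (hG0 : Tendsto G atBot (nhds 0)) (hG1 : Tendsto G atTop (nhds 1))
    (hgc : Continuous g) (hgpos : ∀ x, 0 < g x)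
    (hlo : 0 < y - ε) (hhi : y + ε < 1) (hε : 0 ≤ ε) : 0 < quantileWindowInf G g y ε :=
  pos_sInf_image_Icc (nonempty_Icc.1 ⟨_, invFun_mem_Icc_invFun hGc hGmono hG0 hG1 hlo hhi hε⟩)
    hgc.continuousOn fun x _ => hgpos x

theorem quantileWindowInf_anti (hGc : Continuous G) (hGmono : StrictMono G)
    (hG0 : Tendsto G atBot (nhds 0)) (hG1 : Tendsto G atTop (nhds 1)) (hgc : Continuous g)
    (hlo : 0 < y - ε') (hhi : y + ε' < 1) (hε : 0 ≤ ε) (hεε' : ε ≤ ε') :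
    quantileWindowInf G g y ε' ≤ quantileWindowInf G g y ε := by
  have hmono := monotoneOn_invFun hGc hGmono hG0 hG1
  have hsub : Icc (invFun G (y - ε)) (invFun G (y + ε)) ⊆
      Icc (invFun G (y - ε')) (invFun G (y + ε')) :=
    Icc_subset_Icc (hmono ⟨hlo, by linarith⟩ ⟨by linarith, by linarith⟩ (by linarith))
      (hmono ⟨by linarith, by linarith⟩ ⟨by linarith, hhi⟩ (by linarith))
  exact csInf_le_csInf (isCompact_Icc.image hgc).bddBelow
    ((Set.nonempty_of_mem (invFun_mem_Icc_invFun hGc hGmono hG0 hG1 (by linarith) (by linarith)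
      hε)).image g) (image_mono hsub)

theorem abs_invFun_sub_invFun_le {F : ℝ → ℝ} (hFc : Continuous F)
    (hF0 : Tendsto F atBot (nhds 0)) (hF1 : Tendsto F atTop (nhds 1))
    (hG0 : Tendsto G atBot (nhds 0)) (hG1 : Tendsto G atTop (nhds 1))
    (hg : ∀ x, HasDerivAt G (g x) x) (hgc : Continuous g) (hgpos : ∀ x, 0 < g x)
    (hlo : 0 < y - ε) (hhi : y + ε < 1) (hFG : ∀ x, |F x - G x| ≤ ε) :
    |invFun F y - invFun G y| ≤ ε / quantileWindowInf G g y ε := by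
  have hGc : Continuous G := continuous_iff_continuousAt.2 fun x => (hg x).continuousAt
  have hGmono : StrictMono G := strictMono_of_hasDerivAt_pos hg hgpos
  have hε : 0 ≤ ε := (abs_nonneg _).trans (hFG 0)
  have hFx : F (invFun F y) = y := apply_invFun_of_tendsto hFc hF0 hF1 ⟨by linarith, by linarith⟩
  have hGu : G (invFun G y) = y := apply_invFun_of_tendsto hGc hG0 hG1 ⟨by linarith, by linarith⟩
  have hGx : |G (invFun F y) - y| ≤ ε := by
    simpa only [hFx, abs_sub_comm] using hFG (invFun F y)
  have hm : ∀ z ∈ Icc (invFun G (y - ε)) (invFun G (y + ε)), quantileWindowInf G g y ε ≤ g z :=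
    fun z hz => csInf_le (isCompact_Icc.image hgc).bddBelow ⟨z, hz, rfl⟩
  rw [le_div_iff₀' (quantileWindowInf_pos hGc hGmono hG0 hG1 hgc hgpos hlo hhi hε)]
  calc quantileWindowInf G g y ε * |invFun F y - invFun G y|
      ≤ |G (invFun F y) - G (invFun G y)| :=
        mul_abs_sub_le_abs_sub_of_le_hasDerivAt (fun x _ => hg x) hm
          (mem_Icc_invFun_of_abs_sub_le hGc hGmono hG0 hG1 hlo hhi hGx)
          (invFun_mem_Icc_invFun hGc hGmono hG0 hG1 hlo hhi hε)
    _ ≤ ε := by rwa [hGu]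

theorem abs_invFun_sub_invFun_le_of_le {F : ℝ → ℝ} (hFc : Continuous F)
    (hF0 : Tendsto F atBot (nhds 0)) (hF1 : Tendsto F atTop (nhds 1))
    (hG0 : Tendsto G atBot (nhds 0)) (hG1 : Tendsto G atTop (nhds 1))
    (hg : ∀ x, HasDerivAt G (g x) x) (hgc : Continuous g) (hgpos : ∀ x, 0 < g x)
    (hlo : 0 < y - ε') (hhi : y + ε' < 1) (hεε' : ε ≤ ε') (hFG : ∀ x, |F x - G x| ≤ ε) :
    |invFun F y - invFun G y| ≤ ε / quantileWindowInf G g y ε' := by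
  have hGc : Continuous G := continuous_iff_continuousAt.2 fun x => (hg x).continuousAt
  have hGmono : StrictMono G := strictMono_of_hasDerivAt_pos hg hgpos
  have hε : 0 ≤ ε := (abs_nonneg _).trans (hFG 0)
  calc |invFun F y - invFun G y| ≤ ε / quantileWindowInf G g y ε :=
        abs_invFun_sub_invFun_le hFc hF0 hF1 hG0 hG1 hg hgc hgpos (by linarith) (by linarith) hFG
    _ ≤ ε / quantileWindowInf G g y ε' := by
        gcongr
        · exact quantileWindowInf_pos hGc hGmono hG0 hG1 hgc hgpos hlo hhi (hε.trans hεε')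
        · exact quantileWindowInf_anti hGc hGmono hG0 hG1 hgc hlo hhi hε hεε'

end Window

theorem quantile_rate_one_over_n_general
    (F : ℕ → ℝ → ℝ) (G g : ℝ → ℝ) (c α : ℝ)
    (hFc : ∀ n, Continuous (F n))
    (hF0 : ∀ n, Tendsto (F n) atBot (nhds 0))
    (hF1 : ∀ n, Tendsto (F n) atTop (nhds 1))
    (hG0 : Tendsto G atBot (nhds 0)) (hG1 : Tendsto G atTop (nhds 1))
    (hg : ∀ x, HasDerivAt G (g x) x) (hgc : Continuous g) (hgpos : ∀ x, 0 < g x)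
    (hc : 0 < c)
    (hFG : ∀ n : ℕ, 0 < n → ∀ x, |F n x - G x| ≤ c / n)
    (hα : α ∈ Ioo (0:ℝ) 1) :
    (∀ n : ℕ, c / min α (1 - α) < n →
      |invFun (F n) (1 - α) - invFun G (1 - α)|
        ≤ c / (n * sInf (g '' Icc (invFun G (1 - α - c / n))
                                  (invFun G (1 - α + c / n))))) ∧
    Tendsto (fun n : ℕ => invFun (F n) (1 - α)) atTop (nhds (invFun G (1 - α))) ∧
    (fun n : ℕ => invFun (F n) (1 - α) - invFun G (1 - α))
      =O[atTop] fun n : ℕ => (1 : ℝ) / n := by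
  have hδ : 0 < min α (1 - α) := lt_min hα.1 (sub_pos.2 hα.2)
  have hadmissible : ∀ n : ℕ, c / min α (1 - α) < n →
      0 < n ∧ 0 < 1 - α - c / n ∧ 1 - α + c / n < 1 := by
    intro n hn
    have hnpos : (0 : ℝ) < n := (div_pos hc hδ).trans hn
    have hcn := (div_lt_comm₀ hδ hnpos).1 hn
    exact ⟨Nat.cast_pos.1 hnpos, by linarith [min_le_right α (1 - α)],
      by linarith [min_le_left α (1 - α)]⟩
  have hbound : ∀ n N : ℕ, c / min α (1 - α) < N → N ≤ n →
      |invFun (F n) (1 - α) - invFun G (1 - α)|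
        ≤ c / n / quantileWindowInf G g (1 - α) (c / N) := by
    intro n N hN hNn
    obtain ⟨hNpos, hlo, hhi⟩ := hadmissible N hN
    exact abs_invFun_sub_invFun_le_of_le (hFc n) (hF0 n) (hF1 n) hG0 hG1 hg hgc hgpos hlo hhi
      (div_le_div_of_nonneg_left hc.le (Nat.cast_pos.2 hNpos) (Nat.cast_le.2 hNn))
      (hFG n (hNpos.trans_le hNn))
  obtain ⟨N, hN⟩ := exists_nat_gt (c / min α (1 - α))
  have hO : (fun n : ℕ => invFun (F n) (1 - α) - invFun G (1 - α))
      =O[atTop] fun n : ℕ => (1 : ℝ) / n := by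
    refine IsBigO.of_bound (c / quantileWindowInf G g (1 - α) (c / N)) ?_
    filter_upwards [eventually_ge_atTop N] with n hNn
    rw [Real.norm_eq_abs, Real.norm_of_nonneg (by positivity)]
    exact (hbound n N hN hNn).trans_eq (by ring)
  refine ⟨fun n hn => ?_,
    tendsto_sub_nhds_zero_iff.1 (hO.trans_tendsto tendsto_one_div_atTop_nhds_zero_nat), hO⟩
  rw [← div_div]
  exact hbound n n hn le_rfl

/-- Theorem 1 with an explicit `1/n` rate: a Kolmogorov-distance bound of
order `c/n` gives a quantile error bound `c/(n·m_n)`; in particular the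
quantiles converge at rate `O(1/n)`. -/
theorem quantile_rate_one_over_n
    (F : ℕ → ℝ → ℝ) (G g : ℝ → ℝ) (c α : ℝ)
    (hFmono : ∀ n, StrictMono (F n)) (hFc : ∀ n, Continuous (F n))
    (hF0 : ∀ n, Tendsto (F n) atBot (nhds 0))
    (hF1 : ∀ n, Tendsto (F n) atTop (nhds 1))
    (hGmono : StrictMono G) (hGc : Continuous G)
    (hG0 : Tendsto G atBot (nhds 0)) (hG1 : Tendsto G atTop (nhds 1))
    (hg : ∀ x, HasDerivAt G (g x) x) (hgc : Continuous g) (hgpos : ∀ x, 0 < g x)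
    (hc : 0 < c)
    (hFG : ∀ n : ℕ, 0 < n → ∀ x, |F n x - G x| ≤ c / n)
    (hα : α ∈ Ioo (0:ℝ) 1) :
    (∀ n : ℕ, c / min α (1 - α) < n →
      |invFun (F n) (1 - α) - invFun G (1 - α)|
        ≤ c / (n * sInf (g '' Icc (invFun G (1 - α - c / n))
                                  (invFun G (1 - α + c / n))))) ∧
    Tendsto (fun n : ℕ => invFun (F n) (1 - α)) atTop (nhds (invFun G (1 - α))) ∧
    (fun n : ℕ => invFun (F n) (1 - α) - invFun G (1 - α))
      =O[atTop] fun n : ℕ => (1 : ℝ) / n :=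
  quantile_rate_one_over_n_general F G g c α hFc hF0 hF1 hG0 hG1 hg hgc hgpos hc hFG hα
end
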